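/- arXiv:2302.12953 — 2 statements merged into one kernel-verified Lean document; each statement's English description precedes it below -/
import Mathlib

section
/- Let S = {s_1,...,s_n} be a multiset of positive integers with total sum B, and let Δ ≥ B. Define (2n+2)×(2n+2) matrices T and C by: T[i,j] = s_j if i ∈ {1,2} and j ∈ [1,n], and 0 otherwise; C[1,j] = 1 for j ∈ [3,n+2], C[2,j] = 1 for j ∈ [n+3,2n+2], C[1,2] = C[2,1] = Δ, and C[i,j] = 0 otherwise. Then the minimum over permutations π of [2n+2] of max_i max{send_i(π), rcv_i(π)} equals B/2 if and only if S admits a partition into two subsets of equal sum B/2, where send_i(π) = ∑_j T[i,j]·C[i,π(j)] and rcv_i(π) = ∑_j T[j,π⁻¹(i)]·C[j,i]. -/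
open Finset

/-- Transmission matrix of the PARTITION-to-DRP-MSR reduction (0-indexed):
machines `1,2` of the paper are indices `0,1`; data columns `[1,n]` are indices `< n`. -/
def redT (n : ℕ) (s : Fin n → ℕ) : Matrix (Fin (2*n+2)) (Fin (2*n+2)) ℝ :=
  fun i j => if h : (i.val = 0 ∨ i.val = 1) ∧ j.val < n then (s ⟨j.val, h.2⟩ : ℝ) else 0

/-- Communication cost matrix of the PARTITION-to-DRP-MSR reduction (0-indexed):
`C[1,j]=1` for `j∈[3,n+2]` becomes row `0`, columns `[2,n+1]`, etc. -/
def redC (n : ℕ) (Δ : ℕ) : Matrix (Fin (2*n+2)) (Fin (2*n+2)) ℝ :=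
  fun i j =>
    if i.val = 0 ∧ 2 ≤ j.val ∧ j.val ≤ n+1 then 1
    else if i.val = 1 ∧ n+2 ≤ j.val then 1
    else if (i.val = 0 ∧ j.val = 1) ∨ (i.val = 1 ∧ j.val = 0) then (Δ : ℝ)
    else 0

/-- Send cost of machine `i` under permutation `π`. -/
def sendCost {m : ℕ} (T C : Matrix (Fin m) (Fin m) ℝ) (π : Equiv.Perm (Fin m)) (i : Fin m) : ℝ :=
  ∑ j, T i j * C i (π j)

/-- Receive cost of machine `i` under permutation `π`. -/
def rcvCost {m : ℕ} (T C : Matrix (Fin m) (Fin m) ℝ) (π : Equiv.Perm (Fin m)) (i : Fin m) : ℝ :=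
  ∑ j, T j (π⁻¹ i) * C j i

/-- MSR cost: maximum over machines of max of send and receive cost. -/
def msrCost (n : ℕ) (T C : Matrix (Fin (2*n+2)) (Fin (2*n+2)) ℝ)
    (π : Equiv.Perm (Fin (2*n+2))) : ℝ :=
  Finset.univ.sup' ⟨(⟨0, by omega⟩ : Fin (2*n+2)), Finset.mem_univ _⟩
    (fun i => max (sendCost T C π i) (rcvCost T C π i))


/-!
Write `B = ∑ i, s i`. Rows `0` and `1` of `redC` add up to `Δ ≥ B` in columns `0, 1` and to
exactly `1` in every other column. Hence the send costs of machines `0` and `1` add up to at least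
`B`, so every permutation costs at least `B / 2`; at cost `B / 2` the items for which machine `0`
pays weigh at most `B / 2`, and so do the others, so they split `S` in half. Conversely a perfect
partition `(A, Aᶜ)` is realised by placing the items of `A` in the columns `[2, n + 1]` and the
others in `[n + 2, 2n + 1]`: both machines then send `B / 2`, and every receive cost is a single
`s i ≤ B / 2`.
-/

section MsrCost

variable {n : ℕ} {T C : Matrix (Fin (2*n+2)) (Fin (2*n+2)) ℝ} {π : Equiv.Perm (Fin (2*n+2))}

theorem sendCost_le_msrCost (i : Fin (2*n+2)) : sendCost T C π i ≤ msrCost n T C π :=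
  (le_max_left _ _).trans
    (le_sup' (fun i => max (sendCost T C π i) (rcvCost T C π i)) (mem_univ i))

theorem msrCost_le_iff {c : ℝ} :
    msrCost n T C π ≤ c ↔ ∀ i, sendCost T C π i ≤ c ∧ rcvCost T C π i ≤ c :=
  (sup'_le_iff _ _).trans <| by simp only [mem_univ, true_implies, max_le_iff]

end MsrCost

section RedT

variable {n : ℕ} (s : Fin n → ℕ)

def dataSlot (n : ℕ) : Fin n ↪ Fin (2*n+2) := Fin.castLEEmb (by omega)

theorem redT_dataSlot {r : Fin (2*n+2)} (hr : r.val ≤ 1) (i : Fin n) :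
    redT n s r (dataSlot n i) = s i := by
  simp only [redT, dataSlot, Fin.castLEEmb_apply, Fin.val_castLE]
  rw [dif_pos ⟨by omega, i.isLt⟩]

theorem redT_of_notMem_range {r j : Fin (2*n+2)} (hj : j ∉ Set.range (dataSlot n)) :
    redT n s r j = 0 :=
  dif_neg fun h => hj ⟨⟨j.val, h.2⟩, Fin.ext rfl⟩

theorem redT_of_two_le {r : Fin (2*n+2)} (hr : 2 ≤ r.val) (j : Fin (2*n+2)) :
    redT n s r j = 0 :=
  dif_neg fun h => by omega

theorem redT_one : redT n s 1 = redT n s 0 := by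
  ext j
  simp [redT]

variable (C : Matrix (Fin (2*n+2)) (Fin (2*n+2)) ℝ) (π : Equiv.Perm (Fin (2*n+2)))

theorem sendCost_redT {r : Fin (2*n+2)} (hr : r.val ≤ 1) :
    sendCost (redT n s) C π r = ∑ i, s i * C r (π (dataSlot n i)) :=
  (Fintype.sum_of_injective _ (dataSlot n).injective _ _
    (fun j hj => by rw [redT_of_notMem_range s hj, zero_mul])
    (fun i => by rw [redT_dataSlot s hr])).symm

theorem sendCost_redT_of_two_le {r : Fin (2*n+2)} (hr : 2 ≤ r.val) :
    sendCost (redT n s) C π r = 0 :=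
  sum_eq_zero fun j _ => by rw [redT_of_two_le s hr, zero_mul]

theorem sendCost_zero_add_sendCost_one :
    sendCost (redT n s) C π 0 + sendCost (redT n s) C π 1 =
      ∑ i, s i * (C 0 (π (dataSlot n i)) + C 1 (π (dataSlot n i))) := by
  rw [sendCost_redT s C π (by simp), sendCost_redT s C π (by simp), ← sum_add_distrib]
  simp only [mul_add]

theorem rcvCost_redT (r : Fin (2*n+2)) :
    rcvCost (redT n s) C π r = redT n s 0 (π⁻¹ r) * (C 0 r + C 1 r) := by
  rw [rcvCost, Fintype.sum_eq_add 0 1 (by simp), redT_one, mul_add]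
  rintro j ⟨hj0, hj1⟩
  rw [Ne, Fin.ext_iff, Fin.val_zero] at hj0
  rw [Ne, Fin.ext_iff, Fin.val_one] at hj1
  rw [redT_of_two_le s (by omega), zero_mul]

end RedT

section RedC

variable {n Δ : ℕ}

theorem redC_nonneg (i j : Fin (2*n+2)) : 0 ≤ redC n Δ i j := by
  unfold redC
  split_ifs <;> positivity

theorem one_le_redC_of_ne_zero {i j : Fin (2*n+2)} (h : redC n Δ i j ≠ 0) :
    1 ≤ redC n Δ i j := by
  unfold redC at h ⊢
  split_ifs at h ⊢ <;> simp_all [Nat.one_le_iff_ne_zero]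

theorem redC_of_two_le_of_le {x : Fin (2*n+2)} (h2 : 2 ≤ x.val) (h : x.val ≤ n + 1) :
    redC n Δ 0 x = 1 ∧ redC n Δ 1 x = 0 := by
  unfold redC
  rw [Fin.val_zero, Fin.val_one]
  constructor <;> split_ifs <;> first | rfl | omega | simp_all

theorem redC_of_le {x : Fin (2*n+2)} (h : n + 2 ≤ x.val) :
    redC n Δ 0 x = 0 ∧ redC n Δ 1 x = 1 := by
  unfold redC
  rw [Fin.val_zero, Fin.val_one]
  constructor <;> split_ifs <;> first | rfl | omega | simp_all

theorem redC_zero_add_redC_one_of_two_le {x : Fin (2*n+2)} (hx : 2 ≤ x.val) :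
    redC n Δ 0 x + redC n Δ 1 x = 1 := by
  rcases le_or_gt x.val (n + 1) with h | h
  · rw [(redC_of_two_le_of_le hx h).1, (redC_of_two_le_of_le hx h).2, add_zero]
  · rw [(redC_of_le h).1, (redC_of_le h).2, zero_add]

theorem one_le_redC_zero_add_redC_one (hΔ : 1 ≤ Δ) (x : Fin (2*n+2)) :
    1 ≤ redC n Δ 0 x + redC n Δ 1 x := by
  rcases le_or_gt 2 x.val with hx | hx
  · exact (redC_zero_add_redC_one_of_two_le hx).ge
  · have hΔ' : (1 : ℝ) ≤ Δ := by exact_mod_cast hΔ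
    unfold redC
    rw [Fin.val_zero, Fin.val_one]
    split_ifs <;> first | omega | linarith

end RedC

section Reduction

variable {n Δ : ℕ} {s : Fin n → ℕ}

theorem le_mul_redC_zero_add_redC_one (hΔ : ∑ i, s i ≤ Δ) (i : Fin n) (x : Fin (2*n+2)) :
    (s i : ℝ) ≤ s i * (redC n Δ 0 x + redC n Δ 1 x) := by
  rcases Nat.eq_zero_or_pos (s i) with h | h
  · simp [h]
  · have hΔ' : 1 ≤ Δ :=
      h.trans_le ((single_le_sum (fun j _ => Nat.zero_le (s j)) (mem_univ i)).trans hΔ)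
    exact le_mul_of_one_le_right (Nat.cast_nonneg _) (one_le_redC_zero_add_redC_one hΔ' x)

theorem half_sum_le_msrCost (hΔ : ∑ i, s i ≤ Δ) (π : Equiv.Perm (Fin (2*n+2))) :
    (∑ i, s i : ℝ) / 2 ≤ msrCost n (redT n s) (redC n Δ) π := by
  have hsum : (∑ i, s i : ℝ) ≤
      sendCost (redT n s) (redC n Δ) π 0 + sendCost (redT n s) (redC n Δ) π 1 := by
    rw [sendCost_zero_add_sendCost_one]
    exact sum_le_sum fun i _ => le_mul_redC_zero_add_redC_one hΔ i _
  linarith [sendCost_le_msrCost (T := redT n s) (C := redC n Δ) (π := π) 0,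
    sendCost_le_msrCost (T := redT n s) (C := redC n Δ) (π := π) 1]

theorem exists_two_mul_sum_eq_of_msrCost_le (hΔ : ∑ i, s i ≤ Δ)
    {π : Equiv.Perm (Fin (2*n+2))}
    (h : msrCost n (redT n s) (redC n Δ) π ≤ (∑ i, s i : ℝ) / 2) :
    ∃ A : Finset (Fin n), 2 * ∑ i ∈ A, s i = ∑ i, s i := by
  set p : Fin n → Prop := fun i => redC n Δ 0 (π (dataSlot n i)) ≠ 0
  refine ⟨univ.filter p, ?_⟩
  have hA : ∑ i ∈ univ.filter p, (s i : ℝ) ≤ sendCost (redT n s) (redC n Δ) π 0 := by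
    rw [sum_filter, sendCost_redT s _ π (by simp)]
    refine sum_le_sum fun i _ => ?_
    split_ifs with hi
    · exact le_mul_of_one_le_right (Nat.cast_nonneg _) (one_le_redC_of_ne_zero hi)
    · exact mul_nonneg (Nat.cast_nonneg _) (redC_nonneg _ _)
  have hAc : ∑ i ∈ univ.filter (fun i => ¬p i), (s i : ℝ) ≤
      sendCost (redT n s) (redC n Δ) π 1 := by
    rw [sum_filter, sendCost_redT s _ π (by simp)]
    refine sum_le_sum fun i _ => ?_
    split_ifs with hi
    · exact mul_nonneg (Nat.cast_nonneg _) (redC_nonneg _ _)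
    · have hi : redC n Δ 0 (π (dataSlot n i)) = 0 := not_not.1 hi
      simpa [hi] using le_mul_redC_zero_add_redC_one hΔ i (π (dataSlot n i))
  have hsplit := sum_filter_add_sum_filter_not univ p (fun i => (s i : ℝ))
  have h0 := (msrCost_le_iff.1 h 0).1
  have h1 := (msrCost_le_iff.1 h 1).1
  have : 2 * ∑ i ∈ univ.filter p, (s i : ℝ) = ∑ i, (s i : ℝ) := by linarith
  exact_mod_cast this

theorem two_mul_le_sum_of_two_mul_sum_eq {ι : Type*} [Fintype ι] {s : ι → ℕ} {A : Finset ι}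
    (hA : 2 * ∑ i ∈ A, s i = ∑ i, s i) (i : ι) : 2 * s i ≤ ∑ i, s i := by
  classical
  have hsplit := sum_add_sum_compl A s
  by_cases hi : i ∈ A
  · have := single_le_sum (fun j _ => Nat.zero_le (s j)) hi
    omega
  · have := single_le_sum (fun j _ => Nat.zero_le (s j)) (mem_compl.2 hi)
    omega

def partitionSlot (A : Finset (Fin n)) (i : Fin n) : Fin (2*n+2) :=
  if i ∈ A then ⟨i + 2, by omega⟩ else ⟨i + n + 2, by omega⟩

theorem partitionSlot_injective (A : Finset (Fin n)) : Function.Injective (partitionSlot A) := by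
  intro i j h
  apply_fun Fin.val at h
  unfold partitionSlot at h
  split_ifs at h <;> simp only at h <;> omega

theorem two_le_partitionSlot (A : Finset (Fin n)) (i : Fin n) : 2 ≤ (partitionSlot A i).val := by
  unfold partitionSlot
  split_ifs <;> simp only <;> omega

theorem redC_zero_partitionSlot (A : Finset (Fin n)) (i : Fin n) :
    redC n Δ 0 (partitionSlot A i) = if i ∈ A then 1 else 0 := by
  unfold partitionSlot
  split_ifs
  · exact (redC_of_two_le_of_le (by simp) (by simp)).1
  · exact (redC_of_le (by simp)).1

theorem msrCost_le_of_two_le {π : Equiv.Perm (Fin (2*n+2))}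
    (hπ : ∀ i, 2 ≤ (π (dataSlot n i)).val) {c : ℝ} (hc : 0 ≤ c)
    (h0 : sendCost (redT n s) (redC n Δ) π 0 ≤ c)
    (h1 : sendCost (redT n s) (redC n Δ) π 1 ≤ c)
    (hs : ∀ i, (s i : ℝ) ≤ c) :
    msrCost n (redT n s) (redC n Δ) π ≤ c := by
  refine msrCost_le_iff.2 fun r => ⟨?_, ?_⟩
  · by_cases hr : 2 ≤ r.val
    · rwa [sendCost_redT_of_two_le s _ π hr]
    · obtain rfl | rfl : r = 0 ∨ r = 1 := by
        simp only [Fin.ext_iff, Fin.val_zero, Fin.val_one]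
        omega
      exacts [h0, h1]
  · rw [rcvCost_redT]
    by_cases hr : (π⁻¹ r).val < n
    · obtain ⟨i, hi⟩ : ∃ i, dataSlot n i = π⁻¹ r := ⟨⟨_, hr⟩, Fin.ext rfl⟩
      have hr' : π (dataSlot n i) = r := by simp [hi]
      rw [← hi, redT_dataSlot s (by simp), ← hr', redC_zero_add_redC_one_of_two_le (hπ i),
        mul_one]
      exact hs i
    · rw [redT_of_notMem_range s (by rintro ⟨i, hi⟩; exact hr (hi ▸ i.isLt)), zero_mul]
      exact hc

theorem exists_msrCost_le_of_two_mul_sum_eq {A : Finset (Fin n)}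
    (hA : 2 * ∑ i ∈ A, s i = ∑ i, s i) :
    ∃ π, msrCost n (redT n s) (redC n Δ) π ≤ (∑ i, s i : ℝ) / 2 := by
  obtain ⟨π, hπ⟩ := Equiv.Perm.exists_extending_pair (dataSlot n) (partitionSlot A)
    (dataSlot n).injective (partitionSlot_injective A)
  have hA' : 2 * ∑ i ∈ A, (s i : ℝ) = ∑ i, (s i : ℝ) := by exact_mod_cast hA
  have h0 : sendCost (redT n s) (redC n Δ) π 0 = ∑ i ∈ A, (s i : ℝ) := by
    rw [sendCost_redT s _ π (by simp)]
    simp only [hπ, redC_zero_partitionSlot, mul_ite, mul_one, mul_zero, sum_ite_mem, univ_inter]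
  have h01 : sendCost (redT n s) (redC n Δ) π 0 + sendCost (redT n s) (redC n Δ) π 1 =
      ∑ i, (s i : ℝ) := by
    simp only [sendCost_zero_add_sendCost_one, hπ,
      redC_zero_add_redC_one_of_two_le (two_le_partitionSlot A _), mul_one]
  refine ⟨π, msrCost_le_of_two_le (fun i => hπ i ▸ two_le_partitionSlot A i) (by positivity)
    (by linarith) (by linarith) fun i => ?_⟩
  have : (2 * s i : ℝ) ≤ ∑ i, (s i : ℝ) := by
    exact_mod_cast two_mul_le_sum_of_two_mul_sum_eq hA i
  linarith

end Reduction

theorem stmt_2_general (n : ℕ) (s : Fin n → ℕ)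
    (Δ : ℕ) (hΔ : ∑ i, s i ≤ Δ) :
    ((Finset.univ : Finset (Equiv.Perm (Fin (2*n+2)))).inf'
        ⟨Equiv.refl _, Finset.mem_univ _⟩
        (fun π => msrCost n (redT n s) (redC n Δ) π) = (∑ i, s i : ℝ) / 2) ↔
      ∃ A : Finset (Fin n), 2 * ∑ i ∈ A, s i = ∑ i, s i := by
  constructor
  · intro h
    obtain ⟨π, -, hπ⟩ := exists_mem_eq_inf' ⟨Equiv.refl _, mem_univ _⟩
      (fun π => msrCost n (redT n s) (redC n Δ) π)
    exact exists_two_mul_sum_eq_of_msrCost_le hΔ (hπ ▸ h).le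
  · rintro ⟨A, hA⟩
    obtain ⟨π, hπ⟩ := exists_msrCost_le_of_two_mul_sum_eq (Δ := Δ) hA
    exact le_antisymm (inf'_le_of_le _ (mem_univ π) hπ)
      (le_inf' _ _ fun π _ => half_sum_le_msrCost hΔ π)

theorem stmt_2 (n : ℕ) (hn : 0 < n) (s : Fin n → ℕ) (hs : ∀ i, 0 < s i)
    (Δ : ℕ) (hΔ : ∑ i, s i ≤ Δ) :
    ((Finset.univ : Finset (Equiv.Perm (Fin (2*n+2)))).inf'
        ⟨Equiv.refl _, Finset.mem_univ _⟩
        (fun π => msrCost n (redT n s) (redC n Δ) π) = (∑ i, s i : ℝ) / 2) ↔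
      ∃ A : Finset (Fin n), 2 * ∑ i ∈ A, s i = ∑ i, s i :=
  stmt_2_general n s Δ hΔ
end

section
/- In the k-clique to Selecting-PARTITION reduction with prime q > k, the sets S_v = {(k−1)q^i : i ∈ [n]} and S_e = {q^i + q^j : i ≠ j, i,j ∈ [n]} are disjoint, and moreover base-q digit uniqueness holds: any equality ∑ of elements of a multiset drawn from S_v ∪ S_e with at most k + k(k−1)/2 total elements on each side forces the multisets of q-power contributions to agree, since each q^i appears with total coefficient less than q on either side. -/
open Finset

/-- Vertex-integers of the k-clique-to-Selecting-PARTITION reduction: `(k-1)·q^i`. -/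
def cliqueSv (n k q : ℕ) : Finset ℕ :=
  Finset.image (fun i : Fin n => (k - 1) * q ^ (i : ℕ)) Finset.univ

/-- Edge-integers for all pairs `i ≠ j`: `q^i + q^j`. -/
def cliqueSe' (n q : ℕ) : Finset ℕ :=
  Finset.image (fun p : Fin n × Fin n => q ^ (p.1 : ℕ) + q ^ (p.2 : ℕ))
    (Finset.univ.filter (fun p : Fin n × Fin n => p.1 ≠ p.2))

lemma digit_unique (q : ℕ) (hq : 2 ≤ q) :
    ∀ n (c d : Fin n → ℕ), (∀ i, c i < q) → (∀ i, d i < q) →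
      (∑ i, c i * q ^ (i : ℕ)) = (∑ i, d i * q ^ (i : ℕ)) → c = d := by
  intro n
  induction n with
  | zero => intro c d _ _ _; funext i; exact i.elim0
  | succ m ih =>
    intro c d hc hd hsum
    rw [Fin.sum_univ_succ, Fin.sum_univ_succ] at hsum
    have hrw : ∀ e : Fin (m + 1) → ℕ,
        (∑ i : Fin m, e i.succ * q ^ ((i.succ : Fin (m+1)) : ℕ)) =
          q * ∑ i : Fin m, e i.succ * q ^ (i : ℕ) := by
      intro e
      rw [Finset.mul_sum]
      apply Finset.sum_congr rfl
      intro i _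
      rw [Fin.val_succ, pow_succ]
      ring
    rw [hrw c, hrw d] at hsum
    simp only [Fin.val_zero, pow_zero, mul_one] at hsum
    have h0 : c 0 = d 0 := by
      have := congrArg (· % q) hsum
      simp only [Nat.add_mul_mod_self_left] at this
      rwa [Nat.mod_eq_of_lt (hc 0), Nat.mod_eq_of_lt (hd 0)] at this
    have hq0 : 0 < q := by omega
    have htail : (∑ i : Fin m, c i.succ * q ^ (i : ℕ)) =
        ∑ i : Fin m, d i.succ * q ^ (i : ℕ) := by
      have : q * (∑ i : Fin m, c i.succ * q ^ (i : ℕ)) =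
          q * ∑ i : Fin m, d i.succ * q ^ (i : ℕ) := by omega
      exact Nat.eq_of_mul_eq_mul_left hq0 this
    have := ih (fun i => c i.succ) (fun i => d i.succ)
      (fun i => hc i.succ) (fun i => hd i.succ) htail
    funext i
    refine Fin.cases h0 (fun j => ?_) i
    exact congrFun this j

theorem stmt_16 (n k q : ℕ) (hk : 2 ≤ k) (hq : q.Prime) (hqk : k < q) :
    Disjoint (cliqueSv n k q) (cliqueSe' n q) ∧
    -- base-q digit uniqueness: sums with all coefficients `< q` agree
    -- if and only if the coefficient vectors agree
    ∀ c d : Fin n → ℕ, (∀ i, c i < q) → (∀ i, d i < q) →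
      (∑ i, c i * q ^ (i : ℕ)) = (∑ i, d i * q ^ (i : ℕ)) → c = d := by
  have hq2 : 2 ≤ q := hq.two_le
  refine ⟨?_, fun c d hc hd h => digit_unique q hq2 n c d hc hd h⟩
  rw [Finset.disjoint_left]
  intro x hx hx'
  simp only [cliqueSv, cliqueSe', Finset.mem_image, Finset.mem_filter,
    Finset.mem_univ, true_and] at hx hx'
  obtain ⟨i, hi⟩ := hx
  obtain ⟨⟨a, b⟩, hab, hab'⟩ := hx'
  simp only at hab hab'
  have heq : (k - 1) * q ^ (i : ℕ) = q ^ (a : ℕ) + q ^ (b : ℕ) := hi.trans hab'.symm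
  set c : Fin n → ℕ := fun j => if j = i then k - 1 else 0 with hcdef
  set d : Fin n → ℕ := fun j => (if j = a then 1 else 0) + (if j = b then 1 else 0)
    with hddef
  have hcsum : (∑ j, c j * q ^ (j : ℕ)) = (k - 1) * q ^ (i : ℕ) := by
    simp [hcdef, ite_mul, Finset.sum_ite_eq']
  have hdsum : (∑ j, d j * q ^ (j : ℕ)) = q ^ (a : ℕ) + q ^ (b : ℕ) := by
    simp [hddef, add_mul, ite_mul, Finset.sum_add_distrib, Finset.sum_ite_eq']
  have hcd : c = d := by
    apply digit_unique q hq2 n c d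
    · intro j; simp only [hcdef]; split <;> omega
    · intro j; simp only [hddef]
      have : 2 < q := by omega
      split <;> split <;> omega
    · rw [hcsum, hdsum, heq]
  have ha := congrFun hcd a
  have hb := congrFun hcd b
  simp only [hcdef, hddef, if_pos rfl, if_neg hab, if_neg (Ne.symm hab),
    if_true] at ha hb
  by_cases hai : a = i
  · by_cases hbi : b = i
    · exact hab (hai.trans hbi.symm)
    · rw [if_neg hbi] at hb
      omega
  · rw [if_neg hai] at ha
    omega
end
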